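/- Let t ∈ ℝ with 0 ≤ t ≤ 1/2, and let f ∈ C(φ_t). Then, writing x = 2|a₂| (so that x = |c₁| where c₁ is the first Taylor coefficient of the associated Schwarz function), one has 144·|a₂a₄ − a₃²| ≤ 4 + (4t − 1)x² + (4t² − 5t − 2)x⁴. -/

import Mathlib

open Complex Metric Set

noncomputable def taylorCoeff (f : ℂ → ℂ) (n : ℕ) : ℂ :=
  iteratedDeriv n f 0 / n.factorial

def IsSchwarz (w : ℂ → ℂ) : Prop :=
  AnalyticOnNhd ℂ w (ball (0:ℂ) 1) ∧ w 0 = 0 ∧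
    ∀ z ∈ ball (0:ℂ) 1, ‖w z‖ < 1

def MemC (t : ℝ) (f : ℂ → ℂ) : Prop :=
  AnalyticOnNhd ℂ f (ball (0:ℂ) 1) ∧ f 0 = 0 ∧ deriv f 0 = 1 ∧
    (∀ z ∈ ball (0:ℂ) 1, deriv f z ≠ 0) ∧
    ∃ w : ℂ → ℂ, IsSchwarz w ∧
      ∀ z ∈ ball (0:ℂ) 1,
        1 + z * deriv (deriv f) z / deriv f z
          = 1 + w z + (t : ℂ) * (w z) ^ 2

private lemma eqOn_deriv {s : Set ℂ} (hs : IsOpen s) {g h : ℂ → ℂ}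
    (he : EqOn g h s) : EqOn (deriv g) (deriv h) s := fun z hz =>
  Filter.EventuallyEq.deriv_eq (Filter.eventuallyEq_of_mem (hs.mem_nhds hz) he)

private lemma il1 {s : Set ℂ} (hs : IsOpen s) {u v : ℂ → ℂ}
    (hu : AnalyticOnNhd ℂ u s) (hv : AnalyticOnNhd ℂ v s) :
    EqOn (deriv (fun z => u z * v z))
      (fun z => deriv u z * v z + u z * deriv v z) s := by
  intro z hz
  exact deriv_fun_mul ((hu z hz).differentiableAt) ((hv z hz).differentiableAt)

private lemma il2 {s : Set ℂ} (hs : IsOpen s) {u v : ℂ → ℂ}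
    (hu : AnalyticOnNhd ℂ u s) (hv : AnalyticOnNhd ℂ v s) :
    EqOn (iteratedDeriv 2 (fun z => u z * v z))
      (fun z => iteratedDeriv 2 u z * v z + 2 * (deriv u z * deriv v z)
        + u z * iteratedDeriv 2 v z) s := by
  intro z hz
  have h1 : EqOn (deriv (fun z => u z * v z))
      (fun z => deriv u z * v z + u z * deriv v z) s := il1 hs hu hv
  have : iteratedDeriv 2 (fun z => u z * v z) z
      = deriv (deriv (fun z => u z * v z)) z := by
    rw [iteratedDeriv_succ, iteratedDeriv_one]
  rw [this, eqOn_deriv hs h1 hz]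
  have hu' := hu.deriv
  have hv' := hv.deriv
  have d1 : DifferentiableAt ℂ u z := (hu z hz).differentiableAt
  have d2 : DifferentiableAt ℂ v z := (hv z hz).differentiableAt
  have d3 : DifferentiableAt ℂ (deriv u) z := (hu' z hz).differentiableAt
  have d4 : DifferentiableAt ℂ (deriv v) z := (hv' z hz).differentiableAt
  rw [deriv_fun_add (d3.fun_mul d2) (d1.fun_mul d4), deriv_fun_mul d3 d2, deriv_fun_mul d1 d4]
  simp only [iteratedDeriv_succ, iteratedDeriv_one, iteratedDeriv_zero]
  ring

private lemma il3 {s : Set ℂ} (hs : IsOpen s) {u v : ℂ → ℂ}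
    (hu : AnalyticOnNhd ℂ u s) (hv : AnalyticOnNhd ℂ v s) :
    EqOn (iteratedDeriv 3 (fun z => u z * v z))
      (fun z => iteratedDeriv 3 u z * v z + 3 * (iteratedDeriv 2 u z * deriv v z)
        + 3 * (deriv u z * iteratedDeriv 2 v z) + u z * iteratedDeriv 3 v z) s := by
  intro z hz
  have h2 : EqOn (iteratedDeriv 2 (fun z => u z * v z))
      (fun z => iteratedDeriv 2 u z * v z + 2 * (deriv u z * deriv v z)
        + u z * iteratedDeriv 2 v z) s := il2 hs hu hv
  have : iteratedDeriv 3 (fun z => u z * v z)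
      = deriv (iteratedDeriv 2 (fun z => u z * v z)) := iteratedDeriv_succ
  rw [this, eqOn_deriv hs h2 hz]
  have hu' := hu.deriv
  have hv' := hv.deriv
  have hu'' := hu'.deriv
  have hv'' := hv'.deriv
  have d1 : DifferentiableAt ℂ u z := (hu z hz).differentiableAt
  have d2 : DifferentiableAt ℂ v z := (hv z hz).differentiableAt
  have d3 : DifferentiableAt ℂ (deriv u) z := (hu' z hz).differentiableAt
  have d4 : DifferentiableAt ℂ (deriv v) z := (hv' z hz).differentiableAt
  have e2u : iteratedDeriv 2 u = deriv (deriv u) := by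
    rw [iteratedDeriv_succ, iteratedDeriv_one]
  have e2v : iteratedDeriv 2 v = deriv (deriv v) := by
    rw [iteratedDeriv_succ, iteratedDeriv_one]
  have d5 : DifferentiableAt ℂ (iteratedDeriv 2 u) z := by
    rw [e2u]; exact (hu'' z hz).differentiableAt
  have d6 : DifferentiableAt ℂ (iteratedDeriv 2 v) z := by
    rw [e2v]; exact (hv'' z hz).differentiableAt
  rw [deriv_fun_add ((d5.fun_mul d2).fun_add ((d3.fun_mul d4).const_mul 2)) (d1.fun_mul d6),
    deriv_fun_add (d5.fun_mul d2) ((d3.fun_mul d4).const_mul 2),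
    deriv_fun_mul d5 d2, deriv_const_mul 2 (d3.fun_mul d4), deriv_fun_mul d3 d4,
    deriv_fun_mul d1 d6]
  have e3u : iteratedDeriv 3 u = deriv (iteratedDeriv 2 u) := iteratedDeriv_succ
  have e3v : iteratedDeriv 3 v = deriv (iteratedDeriv 2 v) := iteratedDeriv_succ
  rw [e3u, e3v, e2u, e2v]
  simp only [iteratedDeriv_succ, iteratedDeriv_one, iteratedDeriv_zero]
  ring

private lemma dslope_factor {ψ : ℂ → ℂ}
    (hψ : AnalyticOnNhd ℂ ψ (ball (0:ℂ) 1)) (h0 : ψ 0 = 0)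
    (hb : ∀ z ∈ ball (0:ℂ) 1, ‖ψ z‖ < 1) :
    ∃ φ : ℂ → ℂ, AnalyticOnNhd ℂ φ (ball (0:ℂ) 1) ∧
      (∀ z ∈ ball (0:ℂ) 1, ‖φ z‖ ≤ 1) ∧ ∀ z, ψ z = z * φ z := by
  refine ⟨dslope ψ 0, ?_, ?_, ?_⟩
  · intro z hz
    rcases eq_or_ne z 0 with rfl | hz0
    · obtain ⟨p, hp⟩ := hψ 0 hz
      exact hp.has_fpower_series_dslope_fslope.analyticAt
    · have ha : AnalyticAt ℂ (fun y => (ψ y - ψ 0) / (y - 0)) z := by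
        exact ((hψ z hz).sub analyticAt_const).div
          (analyticAt_id.sub analyticAt_const) (by simpa using hz0)
      refine ha.congr ?_
      filter_upwards [isOpen_compl_singleton.mem_nhds hz0] with y hy
      have : dslope ψ 0 y = slope ψ 0 y := dslope_of_ne ψ hy
      rw [this, slope_def_field]
  · intro z hz
    have h_maps : MapsTo ψ (ball (0:ℂ) 1) (ball (ψ 0) 1) := by
      intro y hy
      rw [h0, mem_ball_zero_iff]
      exact hb y hy
    have := Complex.norm_dslope_le_div_of_mapsTo_ball hψ.differentiableOn (h_maps.mono_right ball_subset_closedBall) hz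
    simpa using this
  · intro z
    have := sub_smul_dslope ψ 0 z
    simp only [sub_zero, h0, smul_eq_mul] at this
    exact this.symm
private lemma derivs_zero_of_abs_eq_one {φ : ℂ → ℂ}
    (hφ : AnalyticOnNhd ℂ φ (ball (0:ℂ) 1))
    (hb : ∀ z ∈ ball (0:ℂ) 1, ‖φ z‖ ≤ 1)
    (h1 : ‖φ 0‖ = 1) :
    deriv φ 0 = 0 ∧ iteratedDeriv 2 φ 0 = 0 := by
  have h0 : (0:ℂ) ∈ ball (0:ℂ) 1 := by simp
  have hmax : IsMaxOn (norm ∘ φ) (ball (0:ℂ) 1) 0 := by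
    intro z hz
    simp only [Function.comp_apply, mem_setOf_eq, h1]
    exact hb z hz
  have heq : EqOn φ (Function.const ℂ (φ 0)) (ball (0:ℂ) 1) :=
    Complex.eqOn_of_isPreconnected_of_isMaxOn_norm
      (convex_ball 0 1).isPreconnected isOpen_ball hφ.differentiableOn h0 hmax
  have hev : φ =ᶠ[nhds (0:ℂ)] Function.const ℂ (φ 0) :=
    Filter.eventuallyEq_of_mem (isOpen_ball.mem_nhds h0) heq
  constructor
  · rw [hev.deriv_eq]; exact deriv_const 0 (φ 0)
  · rw [hev.iteratedDeriv_eq 2]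
    rw [iteratedDeriv_succ, iteratedDeriv_one]
    have : deriv (Function.const ℂ (φ 0)) = fun _ => (0:ℂ) := by
      funext x; exact deriv_const x (φ 0)
    rw [this, deriv_const]
private lemma abs_le_abs_of_normSq {a b : ℂ} (h : Complex.normSq a ≤ Complex.normSq b) :
    ‖a‖ ≤ ‖b‖ := by
  rw [Complex.norm_def, Complex.norm_def]
  exact Real.sqrt_le_sqrt h

private lemma schur_step {φ : ℂ → ℂ}
    (hφ : AnalyticOnNhd ℂ φ (ball (0:ℂ) 1))
    (hb : ∀ z ∈ ball (0:ℂ) 1, ‖φ z‖ ≤ 1)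
    (hγ : ‖φ 0‖ < 1) :
    ∃ φ₁ : ℂ → ℂ, AnalyticOnNhd ℂ φ₁ (ball (0:ℂ) 1) ∧
      (∀ z ∈ ball (0:ℂ) 1, ‖φ₁ z‖ ≤ 1) ∧
      deriv φ 0 = (1 - ((‖φ 0‖ : ℝ) : ℂ)^2) * φ₁ 0 ∧
      iteratedDeriv 2 φ 0 = 2 * (1 - ((‖φ 0‖ : ℝ) : ℂ)^2) * deriv φ₁ 0
        - 2 * (starRingEnd ℂ) (φ 0) * deriv φ 0 * φ₁ 0 := by
  set γ := φ 0 with hγdef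
  set D : ℂ → ℂ := fun z => 1 - (starRingEnd ℂ) γ * φ z with hDdef
  have h0B : (0:ℂ) ∈ ball (0:ℂ) 1 := by simp
  have hD : ∀ z ∈ ball (0:ℂ) 1, D z ≠ 0 := by
    intro z hz hD0
    have h1 : (starRingEnd ℂ) γ * φ z = 1 := by
      exact (sub_eq_zero.mp hD0).symm
    have h2 : ‖(starRingEnd ℂ) γ * φ z‖ < 1 := by
      rw [norm_mul, Complex.norm_conj]
      calc ‖γ‖ * ‖φ z‖ ≤ ‖γ‖ * 1 :=
            mul_le_mul_of_nonneg_left (hb z hz) (norm_nonneg _)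
        _ = ‖γ‖ := mul_one _
        _ < 1 := hγ
    rw [h1] at h2
    simp at h2
  have hDa : AnalyticOnNhd ℂ D (ball (0:ℂ) 1) := fun z hz =>
    analyticAt_const.sub (analyticAt_const.mul (hφ z hz))
  set ψ : ℂ → ℂ := fun z => (φ z - γ) / D z with hψdef
  have hψa : AnalyticOnNhd ℂ ψ (ball (0:ℂ) 1) := fun z hz =>
    ((hφ z hz).sub analyticAt_const).div (hDa z hz) (hD z hz)
  have hψ0 : ψ 0 = 0 := by simp [hψdef, hγdef]
  have hψle : ∀ z ∈ ball (0:ℂ) 1, ‖ψ z‖ ≤ 1 := by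
    intro z hz
    have hkey : ‖φ z - γ‖ ≤ ‖D z‖ := by
      apply abs_le_abs_of_normSq
      have hid : Complex.normSq (D z) - Complex.normSq (φ z - γ)
          = (1 - Complex.normSq γ) * (1 - Complex.normSq (φ z)) := by
        simp only [hDdef, Complex.normSq_apply, Complex.sub_re, Complex.sub_im,
          Complex.mul_re, Complex.mul_im, Complex.conj_re, Complex.conj_im,
          Complex.one_re, Complex.one_im]
        ring
      have hγ2 : Complex.normSq γ ≤ 1 := by
        rw [Complex.normSq_eq_norm_sq]
        exact pow_le_one₀ (norm_nonneg _) hγ.le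
      have hφ2 : Complex.normSq (φ z) ≤ 1 := by
        rw [Complex.normSq_eq_norm_sq]
        exact pow_le_one₀ (norm_nonneg _) (hb z hz)
      nlinarith [hid]
    rw [hψdef]
    simp only [norm_div]
    rw [div_le_one (norm_pos_iff.mpr (hD z hz))]
    exact hkey
  have hψlt : ∀ z ∈ ball (0:ℂ) 1, ‖ψ z‖ < 1 := by
    intro z hz
    rcases lt_or_eq_of_le (hψle z hz) with h | h
    · exact h
    · exfalso
      have hmax : IsMaxOn (norm ∘ ψ) (ball (0:ℂ) 1) z := by
        intro y hy
        simp only [Function.comp_apply, mem_setOf_eq, h]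
        exact hψle y hy
      have heq : EqOn ψ (Function.const ℂ (ψ z)) (ball (0:ℂ) 1) :=
        Complex.eqOn_of_isPreconnected_of_isMaxOn_norm
          (convex_ball 0 1).isPreconnected isOpen_ball hψa.differentiableOn hz hmax
      have h00 := heq h0B
      rw [hψ0] at h00
      simp only [Function.const_apply] at h00
      rw [← h00] at h
      simp at h
  obtain ⟨φ₁, hfa, hf1, hfac⟩ := dslope_factor hψa hψ0 hψlt
  refine ⟨φ₁, hfa, hf1, ?_⟩
  -- identity (φ z - γ) = D z * (z * φ₁ z) on the ball
  have hGid : EqOn (fun z => φ z - γ) (fun z => D z * (z * φ₁ z)) (ball (0:ℂ) 1) := by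
    intro z hz
    simp only
    rw [← hfac z, hψdef]
    simp only
    rw [mul_div_cancel₀ _ (hD z hz)]
  have hva : AnalyticOnNhd ℂ (fun z => z * φ₁ z) (ball (0:ℂ) 1) := fun z hz =>
    analyticAt_id.mul (hfa z hz)
  have hia : AnalyticOnNhd ℂ (fun z : ℂ => z) (ball (0:ℂ) 1) := fun z hz => analyticAt_id
  -- derivatives of v := z * φ₁ z at 0
  have hv0 : (fun z => z * φ₁ z) 0 = 0 := by simp
  have hvd : deriv (fun z => z * φ₁ z) 0 = φ₁ 0 := by
    rw [il1 isOpen_ball hia hfa h0B]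
    simp
  have hid2 : iteratedDeriv 2 (fun z : ℂ => z) 0 = 0 := by
    rw [iteratedDeriv_succ, iteratedDeriv_one]
    have : deriv (fun z : ℂ => z) = fun _ => (1:ℂ) := by funext x; exact deriv_id x
    rw [this, deriv_const]
  have hvd2 : iteratedDeriv 2 (fun z => z * φ₁ z) 0 = 2 * deriv φ₁ 0 := by
    rw [il2 isOpen_ball hia hfa h0B]
    simp [hid2]
  -- derivative of D at 0
  have hDd : ∀ z ∈ ball (0:ℂ) 1, deriv D z = -((starRingEnd ℂ) γ * deriv φ z) := by
    intro z hz
    rw [hDdef]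
    rw [deriv_const_sub, deriv_const_mul _ (hφ z hz).differentiableAt]
  -- left-hand side derivatives
  have hsub : deriv (fun z => φ z - γ) = deriv φ := by
    funext x; exact deriv_sub_const γ
  have hev : (fun z => φ z - γ) =ᶠ[nhds (0:ℂ)] (fun z => D z * (z * φ₁ z)) :=
    Filter.eventuallyEq_of_mem (isOpen_ball.mem_nhds h0B) hGid
  have hD0v : D 0 = 1 - ((‖γ‖ : ℝ) : ℂ)^2 := by
    show 1 - (starRingEnd ℂ) γ * φ 0 = _
    rw [← hγdef, mul_comm, Complex.mul_conj, Complex.normSq_eq_norm_sq]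
    push_cast
    ring
  constructor
  · have h1 := hev.deriv_eq
    rw [hsub] at h1
    rw [h1, il1 isOpen_ball hDa hva h0B]
    simp only [hv0, hvd]
    rw [hD0v]
    ring
  · have h2 := hev.iteratedDeriv_eq 2
    have hsub2 : iteratedDeriv 2 (fun z => φ z - γ) = iteratedDeriv 2 φ := by
      rw [iteratedDeriv_succ', hsub, ← iteratedDeriv_succ']
    rw [hsub2] at h2
    rw [h2, il2 isOpen_ball hDa hva h0B]
    simp only [hv0, hvd, hvd2]
    rw [hD0v, hDd 0 h0B]
    ring
private lemma id_iter23 : iteratedDeriv 2 (fun z : ℂ => z) 0 = 0 ∧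
    iteratedDeriv 3 (fun z : ℂ => z) 0 = 0 := by
  have h1 : deriv (fun z : ℂ => z) = fun _ => (1:ℂ) := by funext x; exact deriv_id x
  have h2 : iteratedDeriv 2 (fun z : ℂ => z) = fun _ => (0:ℂ) := by
    rw [iteratedDeriv_succ, iteratedDeriv_one, h1]
    funext x; exact deriv_const x 1
  constructor
  · rw [h2]
  · rw [iteratedDeriv_succ, h2]
    exact deriv_const 0 0

private lemma schwarz_coeff_bounds {w : ℂ → ℂ} (hw : IsSchwarz w) :
    ∃ c₁ c₂ c₃ : ℂ,
      deriv w 0 = c₁ ∧ iteratedDeriv 2 w 0 = 2 * c₂ ∧ iteratedDeriv 3 w 0 = 6 * c₃ ∧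
      ‖c₁‖ ≤ 1 ∧
      ‖c₂‖ ≤ 1 - (‖c₁‖)^2 ∧
      ‖c₃ * ((1 - ‖c₁‖^2 : ℝ) : ℂ) + (starRingEnd ℂ) c₁ * c₂^2‖
        ≤ (1 - (‖c₁‖)^2)^2 - (‖c₂‖)^2 ∧
      (‖c₁‖ = 1 → c₂ = 0 ∧ c₃ = 0) := by
  obtain ⟨hwa, hw0, hwb⟩ := hw
  have h0B : (0:ℂ) ∈ ball (0:ℂ) 1 := by simp
  obtain ⟨φ₀, h0a, h0b, h0fac⟩ := dslope_factor hwa hw0 hwb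
  have hweq : w = fun z => z * φ₀ z := funext h0fac
  have hia : AnalyticOnNhd ℂ (fun z : ℂ => z) (ball (0:ℂ) 1) := fun z _ => analyticAt_id
  have hk1 : deriv w 0 = φ₀ 0 := by
    rw [hweq, il1 isOpen_ball hia h0a h0B]; simp
  have hk2 : iteratedDeriv 2 w 0 = 2 * deriv φ₀ 0 := by
    rw [hweq, il2 isOpen_ball hia h0a h0B]; simp [id_iter23.1]
  have hk3 : iteratedDeriv 3 w 0 = 3 * iteratedDeriv 2 φ₀ 0 := by
    rw [hweq, il3 isOpen_ball hia h0a h0B]; simp [id_iter23.1, id_iter23.2]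
  refine ⟨φ₀ 0, deriv φ₀ 0, iteratedDeriv 2 φ₀ 0 / 2, hk1, hk2,
    by rw [hk3]; ring, h0b 0 h0B, ?_⟩
  rcases lt_or_eq_of_le (h0b 0 h0B) with hlt | heq1
  · -- |φ₀ 0| < 1
    obtain ⟨φ₁, h1a, h1b, hrel1, hrel2⟩ := schur_step h0a h0b hlt
    have hXr : ((1 : ℂ) - ((‖φ₀ 0‖:ℝ):ℂ)^2)
        = (((1 - (‖φ₀ 0‖)^2 : ℝ)):ℂ) := by push_cast; ring
    have hXnn : (0:ℝ) ≤ 1 - (‖φ₀ 0‖)^2 := by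
      nlinarith [norm_nonneg (φ₀ 0)]
    have habs1 : ‖deriv φ₀ 0‖
        = (1 - (‖φ₀ 0‖)^2) * ‖φ₁ 0‖ := by
      rw [hrel1, norm_mul, hXr, Complex.norm_real, Real.norm_eq_abs, _root_.abs_of_nonneg hXnn]
    have hB : ‖deriv φ₀ 0‖ ≤ 1 - (‖φ₀ 0‖)^2 := by
      rw [habs1]
      calc (1 - (‖φ₀ 0‖)^2) * ‖φ₁ 0‖
          ≤ (1 - (‖φ₀ 0‖)^2) * 1 :=
            mul_le_mul_of_nonneg_left (h1b 0 h0B) hXnn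
        _ = _ := mul_one _
    refine ⟨hB, ?_, fun hcontra => absurd hcontra (ne_of_lt hlt)⟩
    have hkey : iteratedDeriv 2 φ₀ 0 / 2 * (((1 - (‖φ₀ 0‖)^2 : ℝ)):ℂ)
        + (starRingEnd ℂ) (φ₀ 0) * (deriv φ₀ 0)^2
        = (((1 - (‖φ₀ 0‖)^2:ℝ)):ℂ)^2 * deriv φ₁ 0 := by
      rw [← hXr]
      linear_combination (((1:ℂ) - ((‖φ₀ 0‖:ℝ):ℂ)^2)/2) * hrel2
        + ((starRingEnd ℂ) (φ₀ 0) * deriv φ₀ 0) * hrel1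
    have he1le : ‖deriv φ₁ 0‖ ≤ 1 - (‖φ₁ 0‖)^2 := by
      rcases lt_or_eq_of_le (h1b 0 h0B) with hlt2 | heq2
      · obtain ⟨φ₂, _, h2b, hrel1', _⟩ := schur_step h1a h1b hlt2
        have hXr2 : ((1 : ℂ) - ((‖φ₁ 0‖:ℝ):ℂ)^2)
            = (((1 - (‖φ₁ 0‖)^2 : ℝ)):ℂ) := by push_cast; ring
        have hXnn2 : (0:ℝ) ≤ 1 - (‖φ₁ 0‖)^2 := by
          nlinarith [norm_nonneg (φ₁ 0)]
        rw [hrel1', norm_mul, hXr2, Complex.norm_real, Real.norm_eq_abs, _root_.abs_of_nonneg hXnn2]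
        calc (1 - (‖φ₁ 0‖)^2) * ‖φ₂ 0‖
            ≤ (1 - (‖φ₁ 0‖)^2) * 1 :=
              mul_le_mul_of_nonneg_left (h2b 0 h0B) hXnn2
          _ = _ := mul_one _
      · rw [(derivs_zero_of_abs_eq_one h1a h1b heq2).1]
        simp
        nlinarith [heq2]
    rw [hkey, norm_mul, norm_pow, Complex.norm_real, Real.norm_eq_abs, _root_.abs_of_nonneg hXnn, habs1]
    nlinarith [mul_le_mul_of_nonneg_left he1le (sq_nonneg (1 - (‖φ₀ 0‖)^2)),
      sq_nonneg (‖φ₁ 0‖)]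
  · -- |φ₀ 0| = 1
    obtain ⟨hz1, hz2⟩ := derivs_zero_of_abs_eq_one h0a h0b heq1
    refine ⟨?_, ?_, fun _ => ⟨hz1, by rw [hz2]; norm_num⟩⟩
    · rw [hz1, heq1]; simp
    · rw [hz1, hz2, heq1]; norm_num
private lemma ilsum (k : ℕ) : ∀ {s : Set ℂ}, IsOpen s → ∀ {u v : ℂ → ℂ},
    AnalyticOnNhd ℂ u s → AnalyticOnNhd ℂ v s → ∀ (c : ℂ),
    EqOn (iteratedDeriv k (fun z => u z + c * v z))
      (fun z => iteratedDeriv k u z + c * iteratedDeriv k v z) s := by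
  induction k with
  | zero => intro s hs u v hu hv c z hz; simp [iteratedDeriv_zero]
  | succ k ih =>
    intro s hs u v hu hv c z hz
    have hd : EqOn (deriv (fun z => u z + c * v z))
        (fun z => deriv u z + c * deriv v z) s := by
      intro y hy
      rw [deriv_fun_add (hu y hy).differentiableAt
          ((hv y hy).differentiableAt.const_mul c),
        deriv_const_mul c (hv y hy).differentiableAt]
    have h1 : iteratedDeriv (k+1) (fun z => u z + c * v z) z
        = iteratedDeriv k (deriv (fun z => u z + c * v z)) z := by
      rw [iteratedDeriv_succ']
    rw [h1]
    have h2 : iteratedDeriv k (deriv (fun z => u z + c * v z)) z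
        = iteratedDeriv k (fun z => deriv u z + c * deriv v z) z :=
      (Filter.eventuallyEq_of_mem (hs.mem_nhds hz) hd).iteratedDeriv_eq k
    rw [h2, ih hs hu.deriv hv.deriv c hz]
    simp only [iteratedDeriv_succ']

private lemma ode_coeff_relations (t : ℝ) {f w : ℂ → ℂ}
    (hfa : AnalyticOnNhd ℂ f (ball (0:ℂ) 1))
    (hwa : AnalyticOnNhd ℂ w (ball (0:ℂ) 1)) (hw0 : w 0 = 0)
    (hf1 : deriv f 0 = 1)
    (heq : ∀ z ∈ ball (0:ℂ) 1,
      z * deriv (deriv f) z = deriv f z * (w z + (t:ℂ) * w z ^ 2)) :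
    iteratedDeriv 2 f 0 = deriv w 0 ∧
    2 * iteratedDeriv 3 f 0 = 2 * iteratedDeriv 2 f 0 * deriv w 0
      + iteratedDeriv 2 w 0 + 2 * (t:ℂ) * (deriv w 0)^2 ∧
    3 * iteratedDeriv 4 f 0 = 3 * iteratedDeriv 3 f 0 * deriv w 0
      + 3 * iteratedDeriv 2 f 0 * iteratedDeriv 2 w 0 + iteratedDeriv 3 w 0
      + (t:ℂ) * (6 * iteratedDeriv 2 f 0 * (deriv w 0)^2
        + 6 * deriv w 0 * iteratedDeriv 2 w 0) := by
  have h0B : (0:ℂ) ∈ ball (0:ℂ) 1 := by simp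
  have hia : AnalyticOnNhd ℂ (fun z : ℂ => z) (ball (0:ℂ) 1) := fun z _ => analyticAt_id
  have hF1 := hfa.deriv
  have hF2 := hF1.deriv
  have hA : AnalyticOnNhd ℂ (fun z => deriv f z * w z) (ball (0:ℂ) 1) :=
    fun z hz => (hF1 z hz).mul (hwa z hz)
  have hB : AnalyticOnNhd ℂ (fun z => (deriv f z * w z) * w z) (ball (0:ℂ) 1) :=
    fun z hz => ((hF1 z hz).mul (hwa z hz)).mul (hwa z hz)
  -- rewrite R
  have hR : EqOn (fun z => z * deriv (deriv f) z)
      (fun z => (deriv f z * w z) + (t:ℂ) * ((deriv f z * w z) * w z))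
      (ball (0:ℂ) 1) := by
    intro z hz
    show z * deriv (deriv f) z = _
    rw [heq z hz]; ring
  have hRev : (fun z => z * deriv (deriv f) z) =ᶠ[nhds (0:ℂ)]
      (fun z => (deriv f z * w z) + (t:ℂ) * ((deriv f z * w z) * w z)) :=
    Filter.eventuallyEq_of_mem (isOpen_ball.mem_nhds h0B) hR
  -- conversions
  have conv2 : deriv (deriv f) 0 = iteratedDeriv 2 f 0 := by
    simp only [iteratedDeriv_succ', iteratedDeriv_one, iteratedDeriv_zero]
  have conv3 : deriv (deriv (deriv f)) 0 = iteratedDeriv 3 f 0 := by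
    simp only [iteratedDeriv_succ', iteratedDeriv_one, iteratedDeriv_zero]
  have conv4 : iteratedDeriv 2 (deriv (deriv f)) 0 = iteratedDeriv 4 f 0 := by
    simp only [iteratedDeriv_succ', iteratedDeriv_one, iteratedDeriv_zero]
  -- values of A at 0
  have hA0 : (fun z => deriv f z * w z) 0 = 0 := by simp [hw0]
  have hA1 : deriv (fun z => deriv f z * w z) 0 = deriv w 0 := by
    rw [il1 isOpen_ball hF1 hwa h0B]
    simp [hw0, hf1]
  have hA2 : iteratedDeriv 2 (fun z => deriv f z * w z) 0
      = 2 * iteratedDeriv 2 f 0 * deriv w 0 + iteratedDeriv 2 w 0 := by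
    rw [il2 isOpen_ball hF1 hwa h0B]
    simp only [hw0, hf1, conv2]
    ring
  have hA3 : iteratedDeriv 3 (fun z => deriv f z * w z) 0
      = 3 * iteratedDeriv 3 f 0 * deriv w 0
        + 3 * iteratedDeriv 2 f 0 * iteratedDeriv 2 w 0 + iteratedDeriv 3 w 0 := by
    rw [il3 isOpen_ball hF1 hwa h0B]
    simp only [hw0, hf1]
    have e1 : iteratedDeriv 2 (deriv f) 0 = iteratedDeriv 3 f 0 := by
      simp only [iteratedDeriv_succ', iteratedDeriv_one, iteratedDeriv_zero]
    have e2 : deriv (deriv f) 0 = iteratedDeriv 2 f 0 := conv2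
    rw [e1, e2]
    ring
  -- values of B at 0
  have hB1 : deriv (fun z => (deriv f z * w z) * w z) 0 = 0 := by
    rw [il1 isOpen_ball hA hwa h0B]
    simp [hw0]
  have hB2 : iteratedDeriv 2 (fun z => (deriv f z * w z) * w z) 0
      = 2 * (deriv w 0)^2 := by
    rw [il2 isOpen_ball hA hwa h0B]
    simp only [hw0, hA1, hA0]
    ring
  have hB3 : iteratedDeriv 3 (fun z => (deriv f z * w z) * w z) 0
      = 6 * iteratedDeriv 2 f 0 * (deriv w 0)^2 + 6 * deriv w 0 * iteratedDeriv 2 w 0 := by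
    rw [il3 isOpen_ball hA hwa h0B]
    simp only [hw0, hA1, hA2, hA0]
    ring
  -- values of L at 0
  have hL1 : deriv (fun z => z * deriv (deriv f) z) 0 = iteratedDeriv 2 f 0 := by
    rw [il1 isOpen_ball hia hF2 h0B]
    simp [conv2]
  have hL2 : iteratedDeriv 2 (fun z => z * deriv (deriv f) z) 0
      = 2 * iteratedDeriv 3 f 0 := by
    rw [il2 isOpen_ball hia hF2 h0B]
    simp [id_iter23.1, conv3]
  have hL3 : iteratedDeriv 3 (fun z => z * deriv (deriv f) z) 0
      = 3 * iteratedDeriv 4 f 0 := by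
    rw [il3 isOpen_ball hia hF2 h0B]
    simp [id_iter23.1, id_iter23.2, conv4]
  have hRk : ∀ k : ℕ, iteratedDeriv k (fun z => z * deriv (deriv f) z) 0
      = iteratedDeriv k (fun z => deriv f z * w z) 0
        + (t:ℂ) * iteratedDeriv k (fun z => (deriv f z * w z) * w z) 0 := by
    intro k
    rw [hRev.iteratedDeriv_eq k]
    exact ilsum k isOpen_ball hA hB (t:ℂ) h0B
  refine ⟨?_, ?_, ?_⟩
  · have h := hRk 1
    simp only [iteratedDeriv_one] at h
    rw [hL1, hA1, hB1] at h
    simpa using h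
  · have h := hRk 2
    rw [hL2, hA2, hB2] at h
    linear_combination h
  · have h := hRk 3
    rw [hL3, hA3, hB3] at h
    linear_combination h
set_option maxHeartbeats 1000000 in
private lemma final_bound (t : ℝ) (ht0 : 0 ≤ t) (c₁ c₂ c₃ : ℂ)
    (hA : ‖c₁‖ ≤ 1)
    (hB : ‖c₂‖ ≤ 1 - (‖c₁‖)^2)
    (hC : ‖c₃ * ((1 - ‖c₁‖^2 : ℝ) : ℂ) + (starRingEnd ℂ) c₁ * c₂^2‖
      ≤ (1 - (‖c₁‖)^2)^2 - (‖c₂‖)^2)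
    (hD : ‖c₁‖ = 1 → c₂ = 0 ∧ c₃ = 0) :
    ‖6*c₁*c₃ - 4*c₂^2 + (1+4*(t:ℂ))*c₁^2*c₂ + ((t:ℂ)-1-4*(t:ℂ)^2)*c₁^4‖
      ≤ 4 + (4*t-1)*(‖c₁‖)^2 + (4*t^2-5*t-2)*(‖c₁‖)^4 := by
  set x := ‖c₁‖ with hxdef
  set u := ‖c₂‖ with hudef
  have hxnn : 0 ≤ x := norm_nonneg c₁
  have hunn : 0 ≤ u := norm_nonneg c₂
  have htneg : t - 1 - 4*t^2 ≤ 0 := by nlinarith [sq_nonneg (t-1)]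
  rcases lt_or_eq_of_le hA with hx1 | hx1
  · -- x < 1
    have hXnn : (0:ℝ) ≤ 1 - x^2 := by nlinarith
    have hXpos : (0:ℝ) < 1 - x^2 := by nlinarith
    have hmc : c₁ * (starRingEnd ℂ) c₁ = ((x:ℝ):ℂ)^2 := by
      rw [Complex.mul_conj, Complex.normSq_eq_norm_sq]
      push_cast
      ring
    have hHX : ((1-x^2:ℝ):ℂ) * (6*c₁*c₃ - 4*c₂^2 + (1+4*(t:ℂ))*c₁^2*c₂ + ((t:ℂ)-1-4*(t:ℂ)^2)*c₁^4)
        = 6*c₁*(c₃ * ((1 - x^2 : ℝ) : ℂ) + (starRingEnd ℂ) c₁ * c₂^2)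
          + (-((4+2*x^2:ℝ):ℂ))*c₂^2
          + (((1+4*t)*(1-x^2):ℝ):ℂ)*(c₁^2*c₂)
          + (((t-1-4*t^2)*(1-x^2):ℝ):ℂ)*c₁^4 := by
      push_cast
      linear_combination (-6*c₂^2) * hmc
    have hTA : ‖6*c₁*(c₃ * ((1 - x^2 : ℝ) : ℂ) + (starRingEnd ℂ) c₁ * c₂^2)‖
        ≤ 6*x*((1-x^2)^2 - u^2) := by
      rw [norm_mul, norm_mul]
      have h6 : ‖(6:ℂ)‖ = 6 := by
        rw [show (6:ℂ) = ((6:ℝ):ℂ) by norm_num, Complex.norm_real, Real.norm_eq_abs]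
        norm_num
      rw [h6]
      have := mul_le_mul_of_nonneg_left hC (by positivity : (0:ℝ) ≤ 6 * x)
      calc 6 * x * ‖c₃ * ((1 - x^2 : ℝ) : ℂ) + (starRingEnd ℂ) c₁ * c₂^2‖
          ≤ 6 * x * ((1-x^2)^2 - u^2) := this
        _ = _ := by ring
    have hTB : ‖(-((4+2*x^2:ℝ):ℂ))*c₂^2‖ = (4+2*x^2)*u^2 := by
      rw [norm_mul, norm_neg, Complex.norm_real, Real.norm_eq_abs, norm_pow,
        _root_.abs_of_nonneg (by positivity : (0:ℝ) ≤ 4+2*x^2)]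
    have hTC : ‖(((1+4*t)*(1-x^2):ℝ):ℂ)*(c₁^2*c₂)‖
        = (1+4*t)*(1-x^2)*(x^2*u) := by
      rw [norm_mul, Complex.norm_real, Real.norm_eq_abs, norm_mul, norm_pow,
        _root_.abs_of_nonneg (by nlinarith : (0:ℝ) ≤ (1+4*t)*(1-x^2))]
    have hTD : ‖(((t-1-4*t^2)*(1-x^2):ℝ):ℂ)*c₁^4‖
        = (1-t+4*t^2)*(1-x^2)*x^4 := by
      rw [norm_mul, Complex.norm_real, Real.norm_eq_abs, norm_pow, abs_mul,
        _root_.abs_of_nonpos htneg, _root_.abs_of_nonneg hXnn]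
      ring
    have tri : ∀ A B C D : ℂ, ‖A + B + C + D‖
        ≤ ‖A‖ + ‖B‖ + ‖C‖ + ‖D‖ := by
      intro A B C D
      calc ‖A + B + C + D‖ ≤ ‖A + B + C‖ + ‖D‖ :=
            norm_add_le _ _
        _ ≤ (‖A + B‖ + ‖C‖) + ‖D‖ :=
            add_le_add_left (norm_add_le _ _) _
        _ ≤ ((‖A‖ + ‖B‖) + ‖C‖) + ‖D‖ :=
            by gcongr; exact norm_add_le _ _
    have habsprod : (1-x^2) * ‖6*c₁*c₃ - 4*c₂^2 + (1+4*(t:ℂ))*c₁^2*c₂ + ((t:ℂ)-1-4*(t:ℂ)^2)*c₁^4‖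
        ≤ 6*x*((1-x^2)^2 - u^2) + (4+2*x^2)*u^2
          + (1+4*t)*(1-x^2)*(x^2*u) + (1-t+4*t^2)*(1-x^2)*x^4 := by
      have e1 : (1-x^2) * ‖6*c₁*c₃ - 4*c₂^2 + (1+4*(t:ℂ))*c₁^2*c₂ + ((t:ℂ)-1-4*(t:ℂ)^2)*c₁^4‖
          = ‖((1-x^2:ℝ):ℂ) * (6*c₁*c₃ - 4*c₂^2 + (1+4*(t:ℂ))*c₁^2*c₂ + ((t:ℂ)-1-4*(t:ℂ)^2)*c₁^4)‖ := by
        rw [norm_mul, Complex.norm_real, Real.norm_eq_abs, _root_.abs_of_nonneg hXnn]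
      rw [e1, hHX]
      refine (tri _ _ _ _).trans ?_
      rw [hTB, hTC, hTD]
      linarith [hTA]
    have hfinal : 6*x*((1-x^2)^2 - u^2) + (4+2*x^2)*u^2
          + (1+4*t)*(1-x^2)*(x^2*u) + (1-t+4*t^2)*(1-x^2)*x^4
        ≤ (1-x^2) * (4 + (4*t-1)*x^2 + (4*t^2-5*t-2)*x^4) := by
      have hq1 : (0:ℝ) ≤ (4+2*x^2-6*x) * ((1-x^2)^2 - u^2) := by
        apply mul_nonneg
        · nlinarith [sq_nonneg (x-1)]
        · nlinarith
      have hq2 : (0:ℝ) ≤ ((1+4*t)*(1-x^2)*x^2) * ((1-x^2) - u) := by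
        apply mul_nonneg
        · positivity
        · linarith
      nlinarith [hq1, hq2]
    have hcomb := habsprod.trans hfinal
    exact le_of_mul_le_mul_left hcomb hXpos
  · -- x = 1
    obtain ⟨hc20, hc30⟩ := hD hx1
    have hval : (6*c₁*c₃ - 4*c₂^2 + (1+4*(t:ℂ))*c₁^2*c₂ + ((t:ℂ)-1-4*(t:ℂ)^2)*c₁^4)
        = (((t-1-4*t^2:ℝ)):ℂ)*c₁^4 := by
      rw [hc20, hc30]
      push_cast
      ring
    rw [hval, norm_mul, Complex.norm_real, Real.norm_eq_abs, norm_pow,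
      _root_.abs_of_nonpos htneg, ← hxdef, hx1]
    ring_nf
    nlinarith [sq_nonneg t]

set_option maxHeartbeats 1000000 in
theorem secondHankel_x_bound (t : ℝ) (ht0 : 0 ≤ t) (ht1 : t ≤ 1/2)
    (f : ℂ → ℂ) (hf : MemC t f) :
    144 * ‖taylorCoeff f 2 * taylorCoeff f 4 - (taylorCoeff f 3) ^ 2‖
      ≤ 4 + (4*t - 1) * (2 * ‖taylorCoeff f 2‖) ^ 2
        + (4*t^2 - 5*t - 2) * (2 * ‖taylorCoeff f 2‖) ^ 4 := by
  obtain ⟨hfa, hf0, hf1, hfne, w, hws, hode⟩ := hf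
  obtain ⟨hwa, hw0, hwb⟩ := id hws
  have heq : ∀ z ∈ ball (0:ℂ) 1,
      z * deriv (deriv f) z = deriv f z * (w z + (t:ℂ) * w z ^ 2) := by
    intro z hz
    have h := hode z hz
    field_simp [hfne z hz] at h
    linear_combination h
  obtain ⟨R1, R2, R3⟩ := ode_coeff_relations t hfa hwa hw0 hf1 heq
  obtain ⟨c₁, c₂, c₃, hc1, hc2, hc3, hA, hB, hC, hD⟩ := schwarz_coeff_bounds hws
  have ha2 : taylorCoeff f 2 = iteratedDeriv 2 f 0 / 2 := by
    norm_num [taylorCoeff, Nat.factorial]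
  have ha3 : taylorCoeff f 3 = iteratedDeriv 3 f 0 / 6 := by
    norm_num [taylorCoeff, Nat.factorial]
  have ha4 : taylorCoeff f 4 = iteratedDeriv 4 f 0 / 24 := by
    norm_num [taylorCoeff, Nat.factorial]
  have hd2 : iteratedDeriv 2 f 0 = c₁ := by rw [R1, hc1]
  have hd3 : iteratedDeriv 3 f 0 = (1+(t:ℂ))*c₁^2 + c₂ := by
    rw [hc1, hc2, hd2] at R2
    linear_combination R2/2
  rw [hc1, hc2, hc3, hd2, hd3] at R3
  have hH : (144:ℂ) * (taylorCoeff f 2 * taylorCoeff f 4 - (taylorCoeff f 3)^2)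
      = 6*c₁*c₃ - 4*c₂^2 + (1+4*(t:ℂ))*c₁^2*c₂ + ((t:ℂ)-1-4*(t:ℂ)^2)*c₁^4 := by
    rw [ha2, ha3, ha4, hd2, hd3]
    linear_combination c₁ * R3
  have hgoal2 : 2 * ‖taylorCoeff f 2‖ = ‖c₁‖ := by
    rw [ha2, hd2, norm_div]
    simp
    ring
  have hLHS : 144 * ‖taylorCoeff f 2 * taylorCoeff f 4 - (taylorCoeff f 3)^2‖
      = ‖6*c₁*c₃ - 4*c₂^2 + (1+4*(t:ℂ))*c₁^2*c₂ + ((t:ℂ)-1-4*(t:ℂ)^2)*c₁^4‖ := by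
    rw [← hH, norm_mul]
    norm_num
  rw [hLHS, hgoal2]
  exact final_bound t ht0 c₁ c₂ c₃ hA hB hC hD
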